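/- arXiv:2101.09898 — 7 statements merged into one kernel-verified Lean document; each statement's English description precedes it below -/
import Mathlib

section
/- For every a, b ∈ [0,1] and x ∈ (0,1), the equation (ab−c)(āb̄−c)(2x)² = (ab̄+c)(āb+c)(1−x)² has a unique solution c in the closed interval [−min(ab̄, āb), min(ab, āb̄)], where ā = 1−a and b̄ = 1−b. -/
/-!
Put `g c = (r + c)(s + c) B - (p - c)(q - c) A` with `p = ab`, `q = āb̄`, `r = ab̄`, `s = āb`.
On `[-min r s, min p q]` all four factors are nonnegative, so `(r + c)(s + c)` is strictly
increasing and `(p - c)(q - c)` decreasing there: `g` is strictly increasing. At the left endpoint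
one of `r + c`, `s + c` vanishes, at the right one of `p - c`, `q - c`, so `g` changes sign and the
intermediate value theorem gives the root.
-/

theorem strictMonoOn_add_mul_add (r s : ℝ) :
    StrictMonoOn (fun c => (r + c) * (s + c)) (Set.Ici (-min r s)) := by
  intro c hc c' _ hcc'
  have hr : 0 ≤ r + c := by linarith [min_le_left r s, Set.mem_Ici.mp hc]
  have hs : 0 ≤ s + c := by linarith [min_le_right r s, Set.mem_Ici.mp hc]
  exact mul_lt_mul'' (by linarith) (by linarith) hr hs

theorem antitoneOn_sub_mul_sub (p q : ℝ) :
    AntitoneOn (fun c => (p - c) * (q - c)) (Set.Iic (min p q)) := by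
  intro c _ c' hc' hcc'
  have hp : 0 ≤ p - c' := by linarith [min_le_left p q, Set.mem_Iic.mp hc']
  have hq : 0 ≤ q - c' := by linarith [min_le_right p q, Set.mem_Iic.mp hc']
  exact mul_le_mul (by linarith) (by linarith) hq (by linarith)

theorem existsUnique_mem_Icc_sub_mul_sub_mul_eq_add_mul_add_mul {p q r s A B : ℝ} (hA : 0 ≤ A)
    (hB : 0 < B) (hpqrs : -min r s ≤ min p q) :
    ∃! c ∈ Set.Icc (-min r s) (min p q), (p - c) * (q - c) * A = (r + c) * (s + c) * B := by
  set g : ℝ → ℝ := fun c => (r + c) * (s + c) * B - (p - c) * (q - c) * A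
  have hg : StrictMonoOn g (Set.Icc (-min r s) (min p q)) := by
    have hψ : StrictMonoOn _ (Set.Icc (-min r s) (min p q)) :=
      (strictMonoOn_add_mul_add r s).mono Set.Icc_subset_Ici_self
    have hφ : AntitoneOn _ (Set.Icc (-min r s) (min p q)) :=
      (antitoneOn_sub_mul_sub p q).mono Set.Icc_subset_Iic_self
    exact StrictMonoOn.add_monotone (fun _ hx _ hy hxy => mul_lt_mul_of_pos_right (hψ hx hy hxy) hB)
      (AntitoneOn.neg fun _ hx _ hy hxy => mul_le_mul_of_nonneg_right (hφ hx hy hxy) hA)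
  have hg_left : g (-min r s) ≤ 0 := by
    have hψ : (r + -min r s) * (s + -min r s) = 0 := by
      rcases min_choice r s with h | h <;> simp [h]
    have hφ : 0 ≤ (p - -min r s) * (q - -min r s) := by
      have := min_le_left p q; have := min_le_right p q
      exact mul_nonneg (by linarith) (by linarith)
    simp only [g, hψ, zero_mul, zero_sub, neg_nonpos]
    exact mul_nonneg hφ hA
  have hg_right : 0 ≤ g (min p q) := by
    have hφ : (p - min p q) * (q - min p q) = 0 := by
      rcases min_choice p q with h | h <;> simp [h]
    have hψ : 0 ≤ (r + min p q) * (s + min p q) := by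
      have := min_le_left r s; have := min_le_right r s
      exact mul_nonneg (by linarith) (by linarith)
    simp only [g, hφ, zero_mul, sub_zero]
    exact mul_nonneg hψ hB.le
  obtain ⟨c, hc, hgc⟩ := intermediate_value_Icc hpqrs (by fun_prop : Continuous g).continuousOn
    ⟨hg_left, hg_right⟩
  refine ⟨c, ⟨hc, (sub_eq_zero.mp hgc).symm⟩, fun c' ⟨hc', hgc'⟩ => hg.injOn hc' hc ?_⟩
  simp only [g, hgc, hgc', sub_self]

theorem stmt_1 (a b x : ℝ) (ha : a ∈ Set.Icc (0:ℝ) 1) (hb : b ∈ Set.Icc (0:ℝ) 1)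
    (hx : x ∈ Set.Ioo (0:ℝ) 1) :
    ∃! c : ℝ, c ∈ Set.Icc (-(min (a * (1 - b)) ((1 - a) * b))) (min (a * b) ((1 - a) * (1 - b))) ∧
      (a * b - c) * ((1 - a) * (1 - b) - c) * (2 * x) ^ 2
        = (a * (1 - b) + c) * ((1 - a) * b + c) * (1 - x) ^ 2 := by
  obtain ⟨ha0, ha1⟩ := ha
  obtain ⟨hb0, hb1⟩ := hb
  have hB : 0 < (1 - x) ^ 2 := pow_pos (sub_pos.mpr hx.2) 2
  refine existsUnique_mem_Icc_sub_mul_sub_mul_eq_add_mul_add_mul (sq_nonneg _) hB ?_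
  have hr : 0 ≤ a * (1 - b) := mul_nonneg ha0 (sub_nonneg.mpr hb1)
  have hs : 0 ≤ (1 - a) * b := mul_nonneg (sub_nonneg.mpr ha1) hb0
  have hp : 0 ≤ a * b := mul_nonneg ha0 hb0
  have hq : 0 ≤ (1 - a) * (1 - b) := mul_nonneg (sub_nonneg.mpr ha1) (sub_nonneg.mpr hb1)
  exact (neg_nonpos.mpr (le_min hr hs)).trans (le_min hp hq)
end

section
/- For all a, b ∈ ℝ, the polynomial m(x) := (a + b − x)(2 − a − b − x)(2x)² + (a − b + x)(a − b − x)(1 − x)² has at most one root in the half-open interval (0, 1]. -/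
/-!
Dividing by `x²`, the roots of `m` in `(0, 1]` are the zeros of `m x / x²`, and this function is
strictly decreasing on `(0, 1]`: its difference quotient is
`3 (x + y - 2) - (a - b)² (x (1 - y) + y (1 - x)) / (x² y²)`, which is negative there.
This is the discrete form of `2 m - x m' = 2 (1 - x) ((a - b)² + 3 x²)`.
-/

open Set

def mPoly (a b x : ℝ) : ℝ :=
  (a + b - x) * (2 - a - b - x) * (2 * x) ^ 2 + (a - b + x) * (a - b - x) * (1 - x) ^ 2

lemma mPoly_div_sq_sub_mPoly_div_sq (a b : ℝ) {x y : ℝ} (hx : x ≠ 0) (hy : y ≠ 0) :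
    mPoly a b x / x ^ 2 - mPoly a b y / y ^ 2
      = (x - y) *
        (3 * (x + y - 2) - (a - b) ^ 2 * (x * (1 - y) + y * (1 - x)) / (x ^ 2 * y ^ 2)) := by
  unfold mPoly
  field_simp
  ring

lemma strictAntiOn_mPoly_div_sq (a b : ℝ) :
    StrictAntiOn (fun x => mPoly a b x / x ^ 2) (Ioc 0 1) := by
  rintro x ⟨hx0, hx1⟩ y ⟨hy0, hy1⟩ hxy
  have hslope : 3 * (x + y - 2)
      - (a - b) ^ 2 * (x * (1 - y) + y * (1 - x)) / (x ^ 2 * y ^ 2) < 0 := by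
    have : 0 ≤ (a - b) ^ 2 * (x * (1 - y) + y * (1 - x)) / (x ^ 2 * y ^ 2) := by
      have := mul_nonneg hx0.le (sub_nonneg.2 hy1)
      have := mul_nonneg hy0.le (sub_nonneg.2 hx1)
      positivity
    linarith
  have hdiff := mPoly_div_sq_sub_mPoly_div_sq a b hx0.ne' hy0.ne'
  have : 0 < mPoly a b x / x ^ 2 - mPoly a b y / y ^ 2 := by
    rw [hdiff]
    exact mul_pos_of_neg_of_neg (sub_neg.2 hxy) hslope
  simpa using this

theorem stmt_5 (a b : ℝ) :
    ∀ x ∈ Set.Ioc (0:ℝ) 1, ∀ y ∈ Set.Ioc (0:ℝ) 1,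
      (a + b - x) * (2 - a - b - x) * (2 * x) ^ 2
          + (a - b + x) * (a - b - x) * (1 - x) ^ 2 = 0 →
      (a + b - y) * (2 - a - b - y) * (2 * y) ^ 2
          + (a - b + y) * (a - b - y) * (1 - y) ^ 2 = 0 →
      x = y := by
  intro x hx y hy hmx hmy
  apply (strictAntiOn_mPoly_div_sq a b).injOn hx hy
  change mPoly a b x / x ^ 2 = mPoly a b y / y ^ 2
  rw [mPoly, mPoly, hmx, hmy, zero_div, zero_div]
end

section
/- Fix λ ∈ (0, 1/2) and define ρ(r) := √r·(r^λ − 1)/(r − r^λ) for r ∈ (0,1) ∪ (1,∞). Then ρ is strictly increasing on (0,1) and strictly decreasing on (1,∞). -/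
/-!
Substituting `r = exp (2t)` and multiplying numerator and denominator by `exp (-(1 + λ) t)` gives
`ρ (exp (2t)) = sinh (λ t) / sinh ((1 - λ) t)`, an even function of `t`. So it suffices that
`t ↦ sinh (a t) / sinh (b t)` is strictly decreasing on `t > 0` whenever `0 < a < b` (here
`b = 1 - λ > λ = a`). The sign of its derivative is that of
`a cosh (a t) sinh (b t) - b sinh (a t) cosh (b t)`, and by the addition formulas this is negative iff
`sinh ((b - a) t) / ((b - a) t) < sinh ((b + a) t) / ((b + a) t)`,
which holds because `sinh` is strictly convex on `[0, ∞)` and vanishes at `0`.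
-/

open Real Set

lemma strictConvexOn_sinh : StrictConvexOn ℝ (Ici 0) sinh := by
  refine StrictMonoOn.strictConvexOn_of_deriv (convex_Ici 0) continuous_sinh.continuousOn ?_
  rw [Real.deriv_sinh, interior_Ici]
  exact cosh_strictMonoOn.mono Ioi_subset_Ici_self

lemma sinh_div_self_strictMonoOn : StrictMonoOn (fun x => sinh x / x) (Ioi 0) := by
  intro x hx y hy hxy
  simpa using strictConvexOn_sinh.secant_strict_mono self_mem_Ici (mem_Ici_of_Ioi hx)
    (mem_Ici_of_Ioi hy) hx.ne' hy.ne' hxy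

lemma mul_cosh_mul_sinh_lt {a b : ℝ} (ha : 0 < a) (hab : a < b) :
    a * cosh a * sinh b < b * sinh a * cosh b := by
  have key : sinh (b - a) / (b - a) < sinh (b + a) / (b + a) :=
    sinh_div_self_strictMonoOn (sub_pos.2 hab) (by simp only [mem_Ioi]; linarith) (by linarith)
  rw [div_lt_div_iff₀ (by linarith) (by linarith), sinh_sub, sinh_add] at key
  linear_combination key / 2

lemma sinh_mul_div_sinh_mul_strictAntiOn {a b : ℝ} (ha : 0 < a) (hab : a < b) :
    StrictAntiOn (fun t => sinh (a * t) / sinh (b * t)) (Ioi 0) := by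
  have hsinh_pos : ∀ t ∈ Ioi (0 : ℝ), 0 < sinh (b * t) := fun t ht =>
    sinh_pos_iff.2 (mul_pos (ha.trans hab) ht)
  refine strictAntiOn_of_deriv_neg (convex_Ioi 0) ?_ fun t ht => ?_
  · exact (continuous_sinh.comp (continuous_const_mul a)).continuousOn.div
      (continuous_sinh.comp (continuous_const_mul b)).continuousOn fun t ht => (hsinh_pos t ht).ne'
  rw [interior_Ioi] at ht
  have hderiv : HasDerivAt (fun t => sinh (a * t) / sinh (b * t))
      ((a * cosh (a * t) * sinh (b * t) - b * sinh (a * t) * cosh (b * t)) / sinh (b * t) ^ 2) t := by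
    refine (((hasDerivAt_id' t).const_mul a).sinh.div ((hasDerivAt_id' t).const_mul b).sinh
      (hsinh_pos t ht).ne').congr_deriv ?_
    ring
  rw [hderiv.deriv]
  refine div_neg_of_neg_of_pos ?_ (pow_pos (hsinh_pos t ht) 2)
  have key := mul_cosh_mul_sinh_lt (mul_pos ha ht) (mul_lt_mul_of_pos_right hab ht)
  refine neg_of_mul_neg_right (a := t) ?_ ht.le
  linear_combination key

lemma sinh_mul_div_sinh_mul_strictMonoOn {a b : ℝ} (ha : 0 < a) (hab : a < b) :
    StrictMonoOn (fun t => sinh (a * t) / sinh (b * t)) (Iio 0) := by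
  have hneg : StrictAntiOn (fun t : ℝ => -t) (Iio 0) := fun _ _ _ _ h => neg_lt_neg h
  have hcomp := (sinh_mul_div_sinh_mul_strictAntiOn ha hab).comp hneg fun t (ht : t < 0) => neg_pos.2 ht
  refine hcomp.congr fun t _ => ?_
  simp only [Function.comp_apply, mul_neg, sinh_neg, neg_div_neg_eq]

lemma sqrt_mul_rpow_sub_one_div_eq_sinh_div_sinh {l r : ℝ} (hr : 0 < r) :
    √r * (r ^ l - 1) / (r - r ^ l) = sinh (l * (log r / 2)) / sinh ((1 - l) * (log r / 2)) := by
  obtain ⟨t, rfl⟩ : ∃ t, r = exp t ^ 2 :=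
    ⟨log r / 2, by rw [← exp_nat_mul, Nat.cast_ofNat, mul_div_cancel₀ _ two_ne_zero, exp_log hr]⟩
  have hlog : log (exp t ^ 2) / 2 = t := by
    rw [← exp_nat_mul, log_exp, Nat.cast_ofNat, mul_div_cancel_left₀ _ two_ne_zero]
  have hpow : (exp t ^ 2) ^ l = exp (l * t) ^ 2 := by
    rw [← exp_nat_mul, ← exp_nat_mul, ← exp_mul]; ring_nf
  have h1 : exp ((1 - l) * t) = exp t / exp (l * t) := by rw [← exp_sub]; ring_nf
  have h2 : exp (-((1 - l) * t)) = exp (l * t) / exp t := by rw [← exp_sub]; ring_nf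
  rw [hlog, sinh_eq, sinh_eq, h1, h2, exp_neg, sqrt_sq (exp_pos t).le, hpow]
  have := exp_pos t
  have := exp_pos (l * t)
  field_simp

theorem stmt_7 (l : ℝ) (hl : l ∈ Set.Ioo (0:ℝ) (1/2)) :
    StrictMonoOn (fun r : ℝ => Real.sqrt r * (r ^ l - 1) / (r - r ^ l)) (Set.Ioo 0 1) ∧
    StrictAntiOn (fun r : ℝ => Real.sqrt r * (r ^ l - 1) / (r - r ^ l)) (Set.Ioi 1) := by
  obtain ⟨hl0, hl2⟩ := hl
  have hlt : l < 1 - l := by linarith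
  have hρ : EqOn (fun r : ℝ => √r * (r ^ l - 1) / (r - r ^ l))
      ((fun t => sinh (l * t) / sinh ((1 - l) * t)) ∘ fun r => log r / 2) (Ioi 0) :=
    fun r hr => sqrt_mul_rpow_sub_one_div_eq_sinh_div_sinh hr
  have hhalf_log : StrictMonoOn (fun r => log r / 2) (Ioi 0) := fun r hr s hs hrs =>
    div_lt_div_of_pos_right (log_lt_log hr hrs) two_pos
  constructor
  · refine StrictMonoOn.congr ?_ (hρ.symm.mono Ioo_subset_Ioi_self)
    exact (sinh_mul_div_sinh_mul_strictMonoOn hl0 hlt).comp (hhalf_log.mono Ioo_subset_Ioi_self)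
      fun r hr => div_neg_of_neg_of_pos (log_neg hr.1 hr.2) two_pos
  · refine StrictAntiOn.congr ?_ (hρ.symm.mono fun r (hr : 1 < r) => zero_lt_one.trans hr)
    exact (sinh_mul_div_sinh_mul_strictAntiOn hl0 hlt).comp_strictMonoOn
      (hhalf_log.mono fun r (hr : 1 < r) => zero_lt_one.trans hr) fun r hr => half_pos (log_pos hr)
end

section
/- Fix λ ∈ (0, 1/2) and let e₁, e₂, e₃, e₄ > 0 with e₁ + e₂ + e₃ + e₄ = 1. Set r₁ := e₁/e₄ and r₂ := e₂/e₃. If (e₁e₂)^λ/(e₁+e₂) = (e₃e₄)^λ/(e₃+e₄) and (e₁e₃)^λ/(e₁+e₃) = (e₂e₄)^λ/(e₂+e₄), then r₁ = 1 or r₂ = 1. -/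
/-!
Multiplying the two balance equations (and, after swapping sides, dividing them) eliminates
the mixed factors `(e₂e₃)^λ` and `(e₁e₄)^λ`, leaving `f(e₁) = f(e₄)` for
`f t = t^(2λ) / ((t + e₂)(t + e₃))` and `g(e₂) = g(e₃)` for `g t = t^(2λ) / ((t + e₁)(t + e₄))`.
Since `2λ < 1`, a function of the shape `t^p / ((t + a)(t + b))` can take the same value at
`x ≠ y` only if `xy < ab`. So if `e₁ ≠ e₄` and `e₂ ≠ e₃` we would get both `e₁e₄ < e₂e₃`
and `e₂e₃ < e₁e₄`.
-/

theorem Real.rpow_mul_lt_rpow_mul_of_lt {p x y : ℝ} (hp : p < 1) (hx : 0 < x) (hxy : x < y) :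
    y ^ p * x < x ^ p * y := by
  have hy : 0 < y := hx.trans hxy
  have h := Real.self_lt_rpow_of_lt_one (div_pos hx hy) ((div_lt_one hy).2 hxy) hp
  rw [Real.div_rpow hx.le hy.le, div_lt_div_iff₀ hy (by positivity)] at h
  linarith

theorem mul_lt_mul_of_rpow_div_eq {p x y a b : ℝ} (hp : p < 1) (hx : 0 < x) (hy : 0 < y)
    (ha : 0 ≤ a) (hb : 0 ≤ b) (hxy : x ≠ y)
    (h : x ^ p / ((x + a) * (x + b)) = y ^ p / ((y + a) * (y + b))) : x * y < a * b := by
  wlog hlt : x < y generalizing x y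
  · rw [mul_comm]
    exact this hy hx hxy.symm h.symm (hxy.lt_or_gt.resolve_left hlt)
  rw [div_eq_div_iff (by positivity) (by positivity)] at h
  -- `x ^ p / y ^ p > x / y` turns the balance `h` into a strict inequality between the quadratics
  have hquad : x * ((y + a) * (y + b)) < y * ((x + a) * (x + b)) := by
    refine lt_of_mul_lt_mul_left ?_ (Real.rpow_pos_of_pos hy p).le
    calc y ^ p * (x * ((y + a) * (y + b)))
        = y ^ p * x * ((y + a) * (y + b)) := by ring
      _ < x ^ p * y * ((y + a) * (y + b)) :=
          mul_lt_mul_of_pos_right (Real.rpow_mul_lt_rpow_mul_of_lt hp hx hlt)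
            (by positivity)
      _ = y ^ p * (y * ((x + a) * (x + b))) := by linear_combination y * h
  nlinarith

theorem sq_div_mul_eq_of_mul_div_eq {K : Type*} [Field K] {u₁ u₂ u₃ u₄ s₁₂ s₁₃ s₂₄ s₃₄ : K}
    (hu₂ : u₂ ≠ 0) (hu₃ : u₃ ≠ 0)
    (h : u₁ * u₂ / s₁₂ = u₃ * u₄ / s₃₄) (h' : u₁ * u₃ / s₁₃ = u₂ * u₄ / s₂₄) :
    u₁ ^ 2 / (s₁₂ * s₁₃) = u₄ ^ 2 / (s₃₄ * s₂₄) := by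
  refine mul_right_cancel₀ (mul_ne_zero hu₂ hu₃) ?_
  calc u₁ ^ 2 / (s₁₂ * s₁₃) * (u₂ * u₃) = u₁ * u₂ / s₁₂ * (u₁ * u₃ / s₁₃) := by ring
    _ = u₃ * u₄ / s₃₄ * (u₂ * u₄ / s₂₄) := by rw [h, h']
    _ = u₄ ^ 2 / (s₃₄ * s₂₄) * (u₂ * u₃) := by ring

theorem stmt_11_general (l e1 e2 e3 e4 : ℝ) (hl : l ∈ Set.Ioo (0:ℝ) (1/2))
    (h1 : 0 < e1) (h2 : 0 < e2) (h3 : 0 < e3) (h4 : 0 < e4)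
    (heq1 : (e1 * e2) ^ l / (e1 + e2) = (e3 * e4) ^ l / (e3 + e4))
    (heq2 : (e1 * e3) ^ l / (e1 + e3) = (e2 * e4) ^ l / (e2 + e4)) :
    e1 / e4 = 1 ∨ e2 / e3 = 1 := by
  rw [div_eq_one_iff_eq h4.ne', div_eq_one_iff_eq h3.ne']
  by_contra! hne
  have hsq {x : ℝ} (hx : 0 < x) : (x ^ l) ^ 2 = x ^ (2 * l) := by
    rw [← Real.rpow_natCast, ← Real.rpow_mul hx.le, mul_comm, Nat.cast_ofNat]
  have hne0 {x : ℝ} (hx : 0 < x) : x ^ l ≠ 0 := (Real.rpow_pos_of_pos hx l).ne'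
  rw [Real.mul_rpow h1.le h2.le, Real.mul_rpow h3.le h4.le] at heq1
  rw [Real.mul_rpow h1.le h3.le, Real.mul_rpow h2.le h4.le] at heq2
  have h14 := sq_div_mul_eq_of_mul_div_eq (hne0 h2) (hne0 h3) heq1 heq2
  have h23 := sq_div_mul_eq_of_mul_div_eq (hne0 h1) (hne0 h4)
    (by rw [mul_comm (e2 ^ l), mul_comm (e4 ^ l)]; exact heq1) heq2.symm
  rw [hsq h1, hsq h4] at h14
  rw [hsq h2, hsq h3] at h23
  have hp : 2 * l < 1 := by linarith [hl.2]
  have hlt₁ := mul_lt_mul_of_rpow_div_eq hp h1 h4 h2.le h3.le hne.1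
    (by convert h14 using 2; ring)
  have hlt₂ := mul_lt_mul_of_rpow_div_eq hp h2 h3 h1.le h4.le hne.2
    (by convert h23 using 2 <;> ring)
  linarith

theorem stmt_11 (l e1 e2 e3 e4 : ℝ) (hl : l ∈ Set.Ioo (0:ℝ) (1/2))
    (h1 : 0 < e1) (h2 : 0 < e2) (h3 : 0 < e3) (h4 : 0 < e4)
    (hsum : e1 + e2 + e3 + e4 = 1)
    (heq1 : (e1 * e2) ^ l / (e1 + e2) = (e3 * e4) ^ l / (e3 + e4))
    (heq2 : (e1 * e3) ^ l / (e1 + e3) = (e2 * e4) ^ l / (e2 + e4)) :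
    e1 / e4 = 1 ∨ e2 / e3 = 1 :=
  stmt_11_general l e1 e2 e3 e4 hl h1 h2 h3 h4 heq1 heq2
end

section
/- For all r₁, r₂ > 0 and λ ∈ (0,1/2), if (r₁^{2λ} − r₁)·r₂^λ·(1 − r₂) + r₁^λ·(1 − r₁)·(r₂^{2λ} − r₂) = 0, then r₁ = 1 or r₂ = 1. -/
/-
Each term of the sum factors as a positive power times `(r ^ (2 * l) - r) * (1 - r)` for one of
`r = r1, r2`, and this product is positive when `r ≠ 1` because `2 * l < 1`. Hence the two terms
have positive product, so they have the same strict sign and cannot sum to zero.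
-/

lemma add_ne_zero_of_mul_pos {α : Type*} [Ring α] [LinearOrder α] [IsStrictOrderedRing α]
    {a b : α} (h : 0 < a * b) : a + b ≠ 0 := by
  intro hab
  rw [eq_neg_of_add_eq_zero_right hab, mul_neg, neg_pos] at h
  exact (mul_self_nonneg a).not_gt h

lemma Real.rpow_sub_self_mul_one_sub_pos {r μ : ℝ} (hr : 0 < r) (hμ : μ < 1) (hr1 : r ≠ 1) :
    0 < (r ^ μ - r) * (1 - r) := by
  rcases hr1.lt_or_gt with hlt | hgt
  · exact mul_pos (sub_pos.2 (Real.self_lt_rpow_of_lt_one hr hlt hμ)) (sub_pos.2 hlt)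
  · exact mul_pos_of_neg_of_neg (sub_neg.2 (Real.rpow_lt_self_of_one_lt hgt hμ)) (sub_neg.2 hgt)

theorem stmt_12 (r1 r2 l : ℝ) (hr1 : 0 < r1) (hr2 : 0 < r2) (hl : l ∈ Set.Ioo (0:ℝ) (1/2))
    (h : (r1 ^ (2 * l) - r1) * r2 ^ l * (1 - r2) + r1 ^ l * (1 - r1) * (r2 ^ (2 * l) - r2) = 0) :
    r1 = 1 ∨ r2 = 1 := by
  by_contra! hne
  have hμ : 2 * l < 1 := by linarith [hl.2]
  have k1 := Real.rpow_sub_self_mul_one_sub_pos hr1 hμ hne.1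
  have k2 := Real.rpow_sub_self_mul_one_sub_pos hr2 hμ hne.2
  refine add_ne_zero_of_mul_pos ?_ h
  calc 0 < ((r1 ^ (2 * l) - r1) * (1 - r1)) * ((r2 ^ (2 * l) - r2) * (1 - r2)) *
        (r1 ^ l * r2 ^ l) :=
        mul_pos (mul_pos k1 k2) (mul_pos (Real.rpow_pos_of_pos hr1 l) (Real.rpow_pos_of_pos hr2 l))
    _ = _ := by ring
end

section
/- For every x ∈ (0, 1/3) and real s, t with 0 ≤ t ≤ 1, t ≤ s ≤ (1 + t²)/2 and (s, t) ≠ (0, 0), one has 4s·x²·(2 + 6x² − s(1 + 3x)²) + (1 + 3x²)·t² > 0. -/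
/-!
Since `t ≤ s` and `t ≥ 0`, the exclusion of `(0, 0)` forces `s > 0`. For `s ≤ 1/2` the bracket
`2 + 6x² - s(1 + 3x)²` is at least `3(1 - x)²/2 > 0`. For `s ≥ 1/2` the constraint
`s ≤ (1 + t²)/2` gives `t² ≥ 2s - 1`, and replacing `t²` by `2s - 1` leaves a concave quadratic in
`s ∈ [1/2, 1]`, positive at both endpoints: its values there are `3x²(1 - x)²` and
`1 + 7x² - 24x³ - 12x⁴`.
-/

lemma bracket_pos_of_le_half {x s : ℝ} (hx : x < 1) (hs : s ≤ 1 / 2) :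
    0 < 2 + 6 * x ^ 2 - s * (1 + 3 * x) ^ 2 := by
  have hx' : 0 < (1 - x) ^ 2 := by nlinarith
  nlinarith [mul_le_mul_of_nonneg_right hs (sq_nonneg (1 + 3 * x))]

lemma quartic_pos {x : ℝ} (hx0 : 0 ≤ x) (hx1 : x < 1 / 3) :
    0 < 1 + 7 * x ^ 2 - 24 * x ^ 3 - 12 * x ^ 4 := by
  nlinarith [mul_nonneg (mul_nonneg hx0 hx0) hx0, mul_nonneg (mul_nonneg hx0 hx0) (sq_nonneg x)]

/-- The gap to the chord through `s = 1/2` and `s = 1` is `4x²(1 + 3x)²(s - 1/2)(1 - s)`. -/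
lemma reduced_pos_of_half_le {x s : ℝ} (hx0 : 0 < x) (hx1 : x < 1 / 3) (hs0 : 1 / 2 ≤ s)
    (hs1 : s ≤ 1) :
    0 < 4 * s * x ^ 2 * (2 + 6 * x ^ 2 - s * (1 + 3 * x) ^ 2) + (1 + 3 * x ^ 2) * (2 * s - 1) := by
  have chord : 4 * s * x ^ 2 * (2 + 6 * x ^ 2 - s * (1 + 3 * x) ^ 2) + (1 + 3 * x ^ 2) * (2 * s - 1)
      = 2 * (1 - s) * (3 * x ^ 2 * (1 - x) ^ 2)
        + (2 * s - 1) * (1 + 7 * x ^ 2 - 24 * x ^ 3 - 12 * x ^ 4)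
        + 4 * x ^ 2 * (1 + 3 * x) ^ 2 * ((s - 1 / 2) * (1 - s)) := by ring
  have left : 0 < 3 * x ^ 2 * (1 - x) ^ 2 := by
    have : 0 < 1 - x := by linarith
    positivity
  have right := quartic_pos hx0.le hx1
  have gap : 0 ≤ 4 * x ^ 2 * (1 + 3 * x) ^ 2 * ((s - 1 / 2) * (1 - s)) :=
    mul_nonneg (by positivity) (mul_nonneg (by linarith) (by linarith))
  rw [chord]
  rcases hs1.lt_or_eq with hs1 | rfl
  · nlinarith [mul_pos (by linarith : (0 : ℝ) < 2 * (1 - s)) left,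
      mul_nonneg (by linarith : (0 : ℝ) ≤ 2 * s - 1) right.le]
  · nlinarith

theorem stmt_14 (x s t : ℝ) (hx : x ∈ Set.Ioo (0:ℝ) (1/3)) (ht0 : 0 ≤ t) (ht1 : t ≤ 1)
    (hts : t ≤ s) (hs : s ≤ (1 + t ^ 2) / 2) (hne : ¬(s = 0 ∧ t = 0)) :
    4 * s * x ^ 2 * (2 + 6 * x ^ 2 - s * (1 + 3 * x) ^ 2) + (1 + 3 * x ^ 2) * t ^ 2 > 0 := by
  obtain ⟨hx0, hx1⟩ := hx
  have hs0 : 0 < s := by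
    rcases (ht0.trans hts).lt_or_eq with h | h
    · exact h
    · exact absurd ⟨h.symm, le_antisymm (h ▸ hts) ht0⟩ hne
  have htt : 0 ≤ (1 + 3 * x ^ 2) * t ^ 2 := by positivity
  rcases le_or_gt s (1 / 2) with hhalf | hhalf
  · have := bracket_pos_of_le_half (by linarith) hhalf
    have : 0 < 4 * s * x ^ 2 * (2 + 6 * x ^ 2 - s * (1 + 3 * x) ^ 2) := by positivity
    linarith
  · have hs1 : s ≤ 1 := by nlinarith
    have ht2 : (1 + 3 * x ^ 2) * (2 * s - 1) ≤ (1 + 3 * x ^ 2) * t ^ 2 :=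
      mul_le_mul_of_nonneg_left (by linarith) (by positivity)
    linarith [reduced_pos_of_half_le hx0 hx1 hhalf.le hs1]
end

section
/- Let λ ∈ (0,1/2), r := 2 + √3, and x₁ := 1/(1 + 2r(r^{2λ} − 1)/(r² − r^{2λ})). If moreover λ := δ·log₂((1+2δ)/(1−2δ)) where δ := 1/(2 log₂(2+√3)), then x₁ = 1 − 4δ/√3. -/
/-!
Since `δ = 1 / (2 log₂ r)`, the exponent `2λ = 2δ log₂ A` is `log_r A` for `A = (1 + 2δ) / (1 - 2δ)`,
so `r ^ (2λ) = A`. The rest is an identity of rational functions in `r` and `δ` that holds because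
`r = 2 + √3` is a root of `r² - 4r + 1`: it gives `1 / x₁ = (2r - 1) / (2r - 1 - 4rδ)`, and
`r / (2r - 1) = 1 / (r - 2) = 1 / √3`. The bound `log₂ r > 3/2` (from `r² > 8`) keeps `δ < 1/3`,
away from the poles of these expressions.
-/

open Real

lemma rpow_logb_div_logb {b r x : ℝ} (hb₀ : 0 < b) (hb₁ : b ≠ 1) (hr : 0 < r)
    (hr' : logb b r ≠ 0) (hx : 0 < x) : r ^ (logb b x / logb b r) = x := by
  nth_rewrite 1 [← rpow_logb hb₀ hb₁ hr]
  rw [← rpow_mul hb₀.le, mul_div_cancel₀ _ hr', rpow_logb hb₀ hb₁ hx]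

lemma two_add_sqrt_three_sq : (2 + √3) ^ 2 = 4 * (2 + √3) - 1 := by
  nlinarith [sq_sqrt (show (0 : ℝ) ≤ 3 by norm_num)]

lemma three_div_two_lt_logb_two_two_add_sqrt_three : 3 / 2 < logb 2 (2 + √3) := by
  have h8 : (2 : ℝ) ^ 3 < (2 + √3) ^ 2 := by
    nlinarith [two_add_sqrt_three_sq, sqrt_nonneg 3]
  have := logb_lt_logb (b := 2) one_lt_two (by positivity) h8
  rw [logb_pow, logb_pow, logb_self_eq_one one_lt_two] at this
  push_cast at this
  linarith

lemma one_div_one_add_div_eq_one_sub {r δ : ℝ} (hr : r ^ 2 = 4 * r - 1) (hδ : 1 - 2 * δ ≠ 0)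
    (hrδ : 2 * r - 1 - 4 * r * δ ≠ 0) :
    1 / (1 + 2 * r * ((1 + 2 * δ) / (1 - 2 * δ) - 1) / (r ^ 2 - (1 + 2 * δ) / (1 - 2 * δ)))
      = 1 - 4 * δ / (r - 2) := by
  have hr₂ : r - 2 ≠ 0 := by
    intro h; rw [sub_eq_zero.mp h] at hr; norm_num at hr
  have hr₁ : 2 * r - 1 ≠ 0 := by
    intro h; rw [show r = 1 / 2 by linarith] at hr; norm_num at hr
  have hA : r ^ 2 * (1 - 2 * δ) - (1 + 2 * δ) ≠ 0 := by
    intro h; apply hrδ; linear_combination (1 / 2 : ℝ) * h - (1 / 2 - δ) * hr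
  have hden : 1 + 2 * r * ((1 + 2 * δ) / (1 - 2 * δ) - 1) / (r ^ 2 - (1 + 2 * δ) / (1 - 2 * δ))
      = (2 * r - 1) / (2 * r - 1 - 4 * r * δ) := by
    rw [eq_div_iff hrδ]
    field_simp
    linear_combination 4 * r * δ * (2 * δ - 1) * hr
  rw [hden, one_div_div, div_eq_iff hr₁]
  field_simp
  linear_combination (-4) * δ * hr

theorem stmt_19_general (δ l r x1 : ℝ)
    (hδ : δ = 1 / (2 * Real.logb 2 (2 + Real.sqrt 3)))
    (hl : l = δ * Real.logb 2 ((1 + 2 * δ) / (1 - 2 * δ)))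
    (hr : r = 2 + Real.sqrt 3)
    (hx1 : x1 = 1 / (1 + 2 * r * (r ^ (2 * l) - 1) / (r ^ 2 - r ^ (2 * l)))) :
    x1 = 1 - 4 * δ / Real.sqrt 3 := by
  subst hr
  have hL := three_div_two_lt_logb_two_two_add_sqrt_three
  have hδ₀ : 0 < δ := by rw [hδ]; positivity
  have hδ₁ : 2 * δ < 2 / 3 := by
    rw [hδ, mul_one_div]
    exact div_lt_div_of_pos_left two_pos (by norm_num) (by linarith)
  have hrA : (2 + √3) ^ (2 * l) = (1 + 2 * δ) / (1 - 2 * δ) := by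
    have h2l : 2 * l = logb 2 ((1 + 2 * δ) / (1 - 2 * δ)) / logb 2 (2 + √3) := by
      rw [hl, hδ]; field_simp
    rw [h2l]
    exact rpow_logb_div_logb two_pos (by norm_num) (by positivity) (by linarith)
      (div_pos (by linarith) (by linarith))
  have hrδ : 2 * (2 + √3) - 1 - 4 * (2 + √3) * δ ≠ 0 := by
    nlinarith [sqrt_nonneg 3]
  rw [hx1, hrA, one_div_one_add_div_eq_one_sub two_add_sqrt_three_sq (by linarith) hrδ,
    add_sub_cancel_left]

theorem stmt_19 (δ l r x1 : ℝ)
    (hδ : δ = 1 / (2 * Real.logb 2 (2 + Real.sqrt 3)))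
    (hl : l = δ * Real.logb 2 ((1 + 2 * δ) / (1 - 2 * δ)))
    (hr : r = 2 + Real.sqrt 3)
    (hl' : l ∈ Set.Ioo (0:ℝ) (1/2))
    (hx1 : x1 = 1 / (1 + 2 * r * (r ^ (2 * l) - 1) / (r ^ 2 - r ^ (2 * l)))) :
    x1 = 1 - 4 * δ / Real.sqrt 3 :=
  stmt_19_general δ l r x1 hδ hl hr hx1
end
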